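/- arXiv:math/0602103 — 2 statements merged into one kernel-verified Lean document; each statement's English description precedes it below -/
import Mathlib

section
/- For every automorphism φ of the skeleton category _S𝒜⁰_Sk of finitely generated free left S-acts there exists a twisted automorphism φ₀ of _S𝒜⁰_Sk such that φ and φ₀ are naturally isomorphic as functors. -/
/-!
`F₁` is the only object that is a retract of every object it maps to (`Fₙ` is a retract of `F₁`
only for `n = 1`), and this property is invariant under equivalences, so `φ` fixes `F₁`. Right
multiplications identify `End F₁` with `Sᵐᵒᵖ`, so `φ` acting on `End F₁` is a monoid automorphism
`σ` of `S`. Each `Fₙ` is the coproduct of `n` copies of `F₁`, which `φ` preserves, whence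
isomorphisms `φ Fₙ ≅ Fₙ` matching `φ μᵢ` with `μᵢ`; they are natural for `φ^σ` because every
`μᵢ ≫ f` is a right multiplication followed by an injection.
-/

open CategoryTheory

/-- `f : S × X → S × Y` is a homomorphism of free left `S`-acts, where the action of
`S` on `S × X` is `s • (t, x) = (s * t, x)`. -/
def IsActHom (S : Type) [Monoid S] {X Y : Type} (f : S × X → S × Y) : Prop :=
  ∀ (s : S) (p : S × X), f (s * p.1, p.2) = (s * (f p).1, (f p).2)

/-- The skeleton category `_S𝒜⁰_Sk` of finitely generated free left `S`-acts:
objects are natural numbers `n`, standing for the free act `Fₙ = S × Fin n`. -/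
def SkFree (S : Type) [Monoid S] : Type := ℕ

/-- The category structure on `_S𝒜⁰_Sk`: morphisms `n ⟶ m` are the `S`-equivariant maps
`S × Fin n → S × Fin m`. -/
instance (S : Type) [Monoid S] : Category (SkFree S) where
  Hom n m := {f : S × Fin n → S × Fin m // IsActHom S f}
  id n := ⟨fun p => p, fun _ _ => rfl⟩
  comp f g := ⟨fun p => g.1 (f.1 p), fun s p => by
    show g.1 (f.1 (s * p.1, p.2)) = _; rw [f.2 s p]; exact g.2 s (f.1 p)⟩

/-- An automorphism of a category `C`: a functor `C ⥤ C` admitting a functor `ψ` with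
`φ ⋙ ψ` and `ψ ⋙ φ` equal (not merely isomorphic) to the identity functor. -/
def IsCatAutomorphism {C : Type*} [Category C] (φ : C ⥤ C) : Prop :=
  ∃ ψ : C ⥤ C, φ ⋙ ψ = 𝟭 C ∧ ψ ⋙ φ = 𝟭 C

/-- The object `Fₙ = S × Fin n` of the skeleton category. -/
def toSk (S : Type) [Monoid S] (n : ℕ) : SkFree S := n

/-- The twisted automorphism `φ^σ` associated to a monoid automorphism `σ` of `S`:
it fixes every object `Fₙ` and sends `f : Fₙ ⟶ Fₘ` to `σₘ ∘ f ∘ σₙ⁻¹`, where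
`σₙ : S × Fin n → S × Fin n` is the bijection `(t, i) ↦ (σ t, i)`. -/
def twistFunctor (S : Type) [Monoid S] (σ : S ≃* S) : SkFree S ⥤ SkFree S where
  obj n := n
  map {n m} f :=
    ⟨fun p => ((σ ((f.1 (σ.symm p.1, p.2)).1)), (f.1 (σ.symm p.1, p.2)).2), by
      intro s p
      have h := f.2 (σ.symm s) (σ.symm p.1, p.2)
      show ((σ ((f.1 (σ.symm (s * p.1), p.2)).1)), (f.1 (σ.symm (s * p.1), p.2)).2) = _
      rw [map_mul σ.symm s p.1, h]
      simp [map_mul]⟩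
  map_id n := Subtype.ext (funext fun p => by
    show (σ (σ.symm p.1), p.2) = p
    simp)
  map_comp {n m k} f g := Subtype.ext (funext fun p => by
    show (σ ((g.1 (f.1 (σ.symm p.1, p.2))).1), (g.1 (f.1 (σ.symm p.1, p.2))).2) =
        (σ ((g.1 (σ.symm (σ ((f.1 (σ.symm p.1, p.2)).1)), (f.1 (σ.symm p.1, p.2)).2)).1),
          (g.1 (σ.symm (σ ((f.1 (σ.symm p.1, p.2)).1)), (f.1 (σ.symm p.1, p.2)).2)).2)
    simp)

open Limits

namespace CategoryTheory

variable {C : Type*} [Category C]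

def IsRetractOfTargets (X : C) : Prop :=
  ∀ Y : C, Nonempty (X ⟶ Y) → Nonempty (Retract X Y)

lemma Functor.isRetractOfTargets_obj {D : Type*} [Category D] (F : C ⥤ D) [F.IsEquivalence]
    {X : C} (h : IsRetractOfTargets X) : IsRetractOfTargets (F.obj X) := by
  rintro Y ⟨g⟩
  obtain ⟨r⟩ := h _ ⟨F.asEquivalence.toAdjunction.homEquiv X Y g⟩
  exact ⟨(r.map F).trans (.ofIso (F.asEquivalence.counitIso.app Y))⟩

end CategoryTheory

lemma IsCatAutomorphism.isEquivalence {C : Type*} [Category C] {φ : C ⥤ C}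
    (h : IsCatAutomorphism φ) : φ.IsEquivalence :=
  let ⟨ψ, hφψ, hψφ⟩ := h
  (CategoryTheory.Equivalence.mk φ ψ (eqToIso hφψ.symm) (eqToIso hψφ)).isEquivalence_functor

namespace SkFree

variable {S : Type} [Monoid S]

lemma hom_ext {X Y : SkFree S} {f g : X ⟶ Y} (h : ∀ p, f.1 p = g.1 p) : f = g :=
  Subtype.ext (funext h)

lemma hom_apply {X Y : SkFree S} (f : X ⟶ Y) (s : S) (x : Fin X) :
    f.1 (s, x) = (s * (f.1 (1, x)).1, (f.1 (1, x)).2) := by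
  simpa using f.2 s (1, x)

lemma hom_apply_snd {X Y : SkFree S} (f : X ⟶ Y) (s : S) (x : Fin X) :
    (f.1 (s, x)).2 = (f.1 (1, x)).2 := by
  rw [hom_apply f s x]

/-- Typed with `Fin m` rather than `Fin (toSk S m)`, so that `ι S (applyGen f i).2` lands in
`toSk S m` and not in `toSk S (toSk S m)`. -/
def applyGen {n m : ℕ} (f : toSk S n ⟶ toSk S m) (i : Fin n) : S × Fin m := f.1 (1, i)

variable (S) in
def ι {n : ℕ} (i : Fin n) : toSk S 1 ⟶ toSk S n :=
  ⟨fun p => (p.1, i), fun _ _ => rfl⟩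

variable (S) in
def rightMul (s : S) : toSk S 1 ⟶ toSk S 1 :=
  ⟨fun p => (p.1 * s, p.2), fun _ _ => Prod.ext (mul_assoc _ _ _) rfl⟩

variable (S) in
def fold (n : ℕ) : toSk S n ⟶ toSk S 1 :=
  ⟨fun p => (p.1, (0 : Fin 1)), fun _ _ => rfl⟩

lemma ι_comp {n m : ℕ} (f : toSk S n ⟶ toSk S m) (i : Fin n) :
    ι S i ≫ f = rightMul S (applyGen f i).1 ≫ ι S (applyGen f i).2 :=
  hom_ext fun p => hom_apply f p.1 i

lemma eq_rightMul (f : toSk S 1 ⟶ toSk S 1) : f = rightMul S (applyGen f 0).1 :=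
  hom_ext fun ⟨s, x⟩ => by
    obtain rfl := Fin.fin_one_eq_zero x
    exact (hom_apply f s _).trans (Prod.ext rfl (Fin.fin_one_eq_zero _))

lemma rightMul_mul (s t : S) : rightMul S (s * t) = rightMul S s ≫ rightMul S t :=
  hom_ext fun _ => Prod.ext (mul_assoc _ _ _).symm rfl

variable (S) in
def rightMulEquiv : S ≃* (End (toSk S 1))ᵐᵒᵖ where
  toFun s := .op (rightMul S s)
  invFun f := (applyGen f.unop 0).1
  left_inv := one_mul
  right_inv f := congrArg MulOpposite.op (eq_rightMul f.unop).symm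
  map_mul' s t := by rw [rightMul_mul]; rfl

variable (S) in
def isColimitCofan (n : ℕ) : IsColimit (Cofan.mk (toSk S n) (ι S (n := n))) :=
  Cofan.IsColimit.mk _
    (fun t => ⟨fun p => (t.inj p.2).1 (p.1, (0 : Fin 1)),
      fun s p => (t.inj p.2).2 s (p.1, (0 : Fin 1))⟩)
    (fun _ _ => hom_ext fun ⟨_, x⟩ => by obtain rfl := Fin.fin_one_eq_zero x; rfl)
    (fun t _ hm => hom_ext fun ⟨s, j⟩ =>
      congrArg (fun g : toSk S 1 ⟶ t.pt => g.1 (s, (0 : Fin 1))) (hm j))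

lemma ι_comp_twistFunctor_map (σ : S ≃* S) {n m : ℕ} (f : toSk S n ⟶ toSk S m) (i : Fin n) :
    ι S i ≫ (twistFunctor S σ).map f = rightMul S (σ (applyGen f i).1) ≫ ι S (applyGen f i).2 :=
  hom_ext fun ⟨t, _⟩ =>
    (congrArg (fun q : S × Fin m => (σ q.1, q.2)) (hom_apply f (σ.symm t) i)).trans
      (Prod.ext (by rw [map_mul, MulEquiv.apply_symm_apply]; rfl) rfl)

lemma isRetractOfTargets_one : IsRetractOfTargets (toSk S 1) := by
  rintro m ⟨f⟩
  exact ⟨{ i := ι S (applyGen f 0).2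
           r := fold S m
           retract := hom_ext fun ⟨_, x⟩ => Prod.ext rfl (Fin.fin_one_eq_zero x).symm }⟩

lemma eq_one_of_retract {n : ℕ} (r : Retract (toSk S n) (toSk S 1)) : n = 1 := by
  have hgen (k : Fin (toSk S n)) : k = (r.r.1 (1, (0 : Fin 1))).2 :=
    calc k = (r.r.1 (r.i.1 (1, k))).2 :=
          (congrArg (fun g : toSk S n ⟶ toSk S n => (g.1 (1, k)).2) r.retract).symm
      _ = (r.r.1 (1, (r.i.1 (1, k)).2)).2 := hom_apply_snd r.r _ _
      _ = (r.r.1 (1, (0 : Fin 1))).2 :=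
          congrArg (fun x => (r.r.1 (1, x)).2) (Fin.fin_one_eq_zero _)
  have hpos : 0 < n := Fin.pos (applyGen r.r 0).2
  have hle := Fin.subsingleton_iff_le_one.1
    (⟨fun k l => (hgen k).trans (hgen l).symm⟩ : Subsingleton (Fin n))
  omega

lemma isRetractOfTargets_iff {n : ℕ} : IsRetractOfTargets (toSk S n) ↔ n = 1 :=
  ⟨fun h => let ⟨r⟩ := h (toSk S 1) ⟨fold S n⟩; eq_one_of_retract r,
    by rintro rfl; exact isRetractOfTargets_one⟩

lemma obj_one_eq (Φ : SkFree S ⥤ SkFree S) [Φ.IsEquivalence] :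
    Φ.obj (toSk S 1) = toSk S 1 :=
  isRetractOfTargets_iff.1 (Φ.isRetractOfTargets_obj isRetractOfTargets_one)

section

variable (Φ : SkFree S ⥤ SkFree S) [Φ.IsEquivalence] (e : Φ.obj (toSk S 1) ≅ toSk S 1)

noncomputable def twistOf : S ≃* S :=
  let endEquiv : End (toSk S 1) ≃* End (toSk S 1) :=
    ((Functor.FullyFaithful.ofFullyFaithful Φ).mulEquivEnd _).trans e.conj
  ((rightMulEquiv S).trans (MulEquiv.op endEquiv)).trans (rightMulEquiv S).symm

lemma map_rightMul (s : S) :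
    Φ.map (rightMul S s) = e.hom ≫ rightMul S (twistOf Φ e s) ≫ e.inv := by
  have h : rightMul S (twistOf Φ e s) = e.inv ≫ Φ.map (rightMul S s) ≫ e.hom :=
    congrArg MulOpposite.unop ((rightMulEquiv S).apply_symm_apply _)
  simp [h]

noncomputable def objIso (n : ℕ) : Φ.obj (toSk S n) ≅ toSk S n :=
  IsColimit.coconePointsIsoOfNatIso (isColimitCofanMkObjOfIsColimit Φ _ _ (isColimitCofan S n))
    (isColimitCofan S n) (Discrete.natIso fun _ => e)

lemma map_ι_comp_objIso_hom {n : ℕ} (i : Fin n) :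
    Φ.map (ι S i) ≫ (objIso Φ e n).hom = e.hom ≫ ι S i :=
  IsColimit.comp_coconePointsIsoOfNatIso_hom
    (isColimitCofanMkObjOfIsColimit Φ _ _ (isColimitCofan S n)) (isColimitCofan S n) _ ⟨i⟩

lemma map_comp_objIso_hom {n m : ℕ} (f : toSk S n ⟶ toSk S m) :
    Φ.map f ≫ (objIso Φ e m).hom = (objIso Φ e n).hom ≫ (twistFunctor S (twistOf Φ e)).map f := by
  refine Cofan.IsColimit.hom_ext (isColimitCofanMkObjOfIsColimit Φ _ _ (isColimitCofan S n)) _ _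
    fun i => ?_
  rw [cofan_mk_inj, ← Φ.map_comp_assoc, ι_comp, Φ.map_comp_assoc, map_ι_comp_objIso_hom,
    map_rightMul, Category.assoc, Category.assoc, e.inv_hom_id_assoc]
  -- `erw`: the twisted `map f` is elaborated at the objects `n`, `m`, not `toSk S n`, `toSk S m`
  erw [← Category.assoc (Φ.map (ι S i)), map_ι_comp_objIso_hom, Category.assoc]
  exact (e.hom ≫= ι_comp_twistFunctor_map _ f i).symm

theorem nonempty_iso_twistFunctor : Nonempty (Φ ≅ twistFunctor S (twistOf Φ e)) :=
  ⟨NatIso.ofComponents (objIso Φ e) (map_comp_objIso_hom Φ e)⟩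

end

end SkFree

/-- For every automorphism `φ` of the skeleton category `_S𝒜⁰_Sk` there is
a twisted automorphism `φ^σ` such that `φ` and `φ^σ` are naturally isomorphic as functors. -/
theorem automorphism_iso_twisted (S : Type) [Monoid S]
    (φ : SkFree S ⥤ SkFree S) (hφ : IsCatAutomorphism φ) :
    ∃ σ : S ≃* S, Nonempty (φ ≅ twistFunctor S σ) := by
  have := hφ.isEquivalence
  exact ⟨_, SkFree.nonempty_iso_twistFunctor φ (eqToIso (SkFree.obj_one_eq φ))⟩
end

section
/- Let Ω be a set and let S_Ω be the free monoid on Ω, so that unary algebras with the set of unary operations Ω are the same as left S_Ω-acts and free unary algebras are free S_Ω-acts. For every automorphism φ of the category 𝒜_Ω⁰ of finitely generated free S_Ω-acts there exist a permutation π of Ω and, for each object F of 𝒜_Ω⁰, a bijection s_F : F → φ(F) satisfying s_F(f_{i₁}·…·f_{i_k}·a) = π(f_{i₁})·…·π(f_{i_k})·s_F(a) for all generators f_{i₁},…,f_{i_k} ∈ Ω and a ∈ F, such that φ(f) = s_{F'} ∘ f ∘ s_F⁻¹ for every morphism f : F → F' of 𝒜_Ω⁰. -/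
/-! The rank-one free act `G` represents the forgetful functor, `(G ⟶ A) ≃ S × A.X`, and its
endomorphism monoid is `Sᵐᵒᵖ`. `G` is a retract of every free act on a nonempty set, and every
retract of `G` has at most one generator; an autoequivalence `φ` preserves both facts, so
`φ G ≅ G`. Transporting `G ⟶ -` along `φ` and this isomorphism gives bijections
`S × A.X ≃ S × (φ A).X`, natural in `A` and semilinear over the automorphism of `S` induced by
`φ` on `End G`. Automorphisms of a free monoid permute its irreducible elements, which are
exactly the generators: this gives `π`. -/

open CategoryTheory

/-- Objects of the category `_S𝒜⁰` of finitely generated free left `S`-acts: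
the free `S`-act on a finite set `X`, with carrier `S × X`. -/
structure FreeAct (S : Type) [Monoid S] : Type 1 where
  X : Type
  finX : Finite X

/-- The category `_S𝒜⁰`: morphisms are the `S`-equivariant maps. -/
instance (S : Type) [Monoid S] : Category (FreeAct S) where
  Hom A B := {f : S × A.X → S × B.X // IsActHom S f}
  id A := ⟨fun p => p, fun _ _ => rfl⟩
  comp f g := ⟨fun p => g.1 (f.1 p), fun s p => by
    show g.1 (f.1 (s * p.1, p.2)) = _; rw [f.2 s p]; exact g.2 s (f.1 p)⟩

namespace FreeMonoid

variable {α β : Type*}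

theorem irreducible_iff_exists_eq_of {x : FreeMonoid α} : Irreducible x ↔ ∃ a, x = of a := by
  constructor
  · intro hx
    cases x with
    | one => exact absurd isUnit_one hx.not_isUnit
    | of_mul a y =>
      refine ⟨a, ?_⟩
      rcases hx.isUnit_or_isUnit rfl with ha | hy
      · exact absurd (isUnit_iff_eq_one.1 ha) (of_ne_one a)
      · rw [isUnit_iff_eq_one.1 hy, mul_one]
  · rintro ⟨a, rfl⟩
    refine ⟨fun h => of_ne_one a (isUnit_iff_eq_one.1 h), fun y z hyz => ?_⟩
    have hlen : y.length + z.length = 1 := by rw [← length_mul, ← hyz, length_of]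
    simp only [isUnit_iff_eq_one, ← length_eq_zero]
    omega

noncomputable def equivIrreducible (α : Type*) : α ≃ {x : FreeMonoid α // Irreducible x} :=
  Equiv.ofBijective (fun a => ⟨of a, irreducible_iff_exists_eq_of.2 ⟨a, rfl⟩⟩)
    ⟨fun _ _ h => of_injective (congrArg Subtype.val h),
      fun ⟨_, hx⟩ => (irreducible_iff_exists_eq_of.1 hx).imp fun _ h => Subtype.ext h.symm⟩

noncomputable def equivOfMulEquiv (e : FreeMonoid α ≃* FreeMonoid β) : α ≃ β :=
  (equivIrreducible α).trans <|
    (e.toEquiv.subtypeEquiv fun _ => (MulEquiv.irreducible_iff e).symm).trans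
      (equivIrreducible β).symm

theorem of_equivOfMulEquiv (e : FreeMonoid α ≃* FreeMonoid β) (a : α) :
    of (equivOfMulEquiv e a) = e (of a) :=
  congrArg Subtype.val <| (equivIrreducible β).apply_symm_apply _

end FreeMonoid

namespace FreeAct

variable {S : Type} [Monoid S]

theorem hom_ext {A B : FreeAct S} {f g : A ⟶ B} (h : ∀ p, f.1 p = g.1 p) : f = g :=
  Subtype.ext (funext h)

@[simp]
theorem comp_val {A B C : FreeAct S} (f : A ⟶ B) (g : B ⟶ C) (p : S × A.X) :
    (f ≫ g).1 p = g.1 (f.1 p) := rfl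

@[simp]
theorem id_val (A : FreeAct S) (p : S × A.X) : (𝟙 A : A ⟶ A).1 p = p := rfl

theorem hom_apply_mul {A B : FreeAct S} (f : A ⟶ B) (s : S) (p : S × A.X) :
    f.1 (s * p.1, p.2) = (s * (f.1 p).1, (f.1 p).2) := f.2 s p

variable (S) in
def rankOne : FreeAct S := ⟨PUnit, inferInstance⟩

def homOfPoint {A : FreeAct S} (p : S × A.X) : rankOne S ⟶ A :=
  ⟨fun q => (q.1 * p.1, p.2), fun s q => by simp [mul_assoc]⟩

@[simp]
theorem homOfPoint_apply {A : FreeAct S} (p : S × A.X) (q : S × (rankOne S).X) :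
    (homOfPoint p).1 q = (q.1 * p.1, p.2) := rfl

theorem homOfPoint_comp {A B : FreeAct S} (p : S × A.X) (f : A ⟶ B) :
    homOfPoint p ≫ f = homOfPoint (f.1 p) :=
  hom_ext fun q => hom_apply_mul f q.1 p

theorem homOfPoint_mul {A : FreeAct S} (s : S) (p : S × A.X) :
    homOfPoint (s * p.1, p.2) =
      homOfPoint ((s, PUnit.unit) : S × (rankOne S).X) ≫ homOfPoint p :=
  hom_ext fun _ => by simp [mul_assoc]

def homEquiv (A : FreeAct S) : (rankOne S ⟶ A) ≃ S × A.X where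
  toFun f := f.1 (1, PUnit.unit)
  invFun := homOfPoint
  left_inv f := hom_ext fun ⟨t, ⟨⟩⟩ => by
    simpa using (hom_apply_mul f t (1, PUnit.unit)).symm
  right_inv p := by simp

@[simp]
theorem homEquiv_apply {A : FreeAct S} (f : rankOne S ⟶ A) :
    homEquiv A f = f.1 (1, PUnit.unit) := rfl

@[simp]
theorem homEquiv_symm_apply {A : FreeAct S} (p : S × A.X) : (homEquiv A).symm p = homOfPoint p :=
  rfl

/-- `s` acts on `rankOne S` by right multiplication `t ↦ t * s`, hence the opposite monoid. -/
def endMulEquiv : Sᵐᵒᵖ ≃* End (rankOne S) where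
  toFun s := homOfPoint (s.unop, PUnit.unit)
  invFun f := .op (homEquiv _ f).1
  left_inv s := by simp
  right_inv f := by
    conv_rhs => rw [← (homEquiv _).symm_apply_apply f]
    rfl
  map_mul' s t := by
    rw [End.mul_def, ← homOfPoint_mul]
    rfl

theorem subsingleton_hom_of_isEmpty {A B : FreeAct S} [IsEmpty A.X] : Subsingleton (A ⟶ B) :=
  ⟨fun _ _ => hom_ext fun p => isEmptyElim p.2⟩

theorem exists_hom_ne_of_mem {A : FreeAct S} (x : A.X) :
    ∃ (B : FreeAct S) (f g : A ⟶ B), f ≠ g :=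
  ⟨⟨Bool, inferInstance⟩, ⟨fun q => (q.1, true), fun _ _ => rfl⟩,
    ⟨fun q => (q.1, false), fun _ _ => rfl⟩,
    fun h => Bool.noConfusion (congrArg Prod.snd (congrFun (congrArg Subtype.val h) (1, x)))⟩

theorem nonempty_obj_of_faithful {T : Type} [Monoid T] (F : FreeAct S ⥤ FreeAct T) [F.Faithful]
    {A : FreeAct S} (x : A.X) : Nonempty (F.obj A).X := by
  obtain ⟨B, f, g, hfg⟩ := exists_hom_ne_of_mem x
  by_contra h
  have := not_nonempty_iff.1 h
  exact hfg (F.map_injective (subsingleton_hom_of_isEmpty.elim _ _))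

def retractOfPoint {B : FreeAct S} (y : B.X) : Retract (rankOne S) B where
  i := homOfPoint (1, y)
  r := ⟨fun q => (q.1, PUnit.unit), fun _ _ => rfl⟩
  retract := hom_ext fun ⟨_, ⟨⟩⟩ => by simp

theorem subsingleton_of_retract {A : FreeAct S} (h : Retract A (rankOne S)) : Subsingleton A.X := by
  have key (x : A.X) : x = (h.r.1 (1, PUnit.unit)).2 := by
    have hx : h.r.1 (h.i.1 (1, x)) = (1, x) := congrFun (congrArg Subtype.val h.retract) (1, x)
    generalize h.i.1 (1, x) = q at hx
    obtain ⟨t, ⟨⟩⟩ := q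
    have hr := hom_apply_mul h.r t (1, PUnit.unit)
    rw [mul_one] at hr
    rw [hr] at hx
    exact (congrArg Prod.snd hx).symm
  exact ⟨fun x y => (key x).trans (key y).symm⟩

def isoOfSubsingleton {A : FreeAct S} (x : A.X) [Subsingleton A.X] : rankOne S ≅ A where
  hom := homOfPoint (1, x)
  inv := ⟨fun q => (q.1, PUnit.unit), fun _ _ => rfl⟩
  hom_inv_id := hom_ext fun ⟨_, ⟨⟩⟩ => by simp
  inv_hom_id := hom_ext fun _ => Prod.ext (mul_one _) (Subsingleton.elim _ _)

theorem nonempty_iso_functor_obj_rankOne {T : Type} [Monoid T] (e : FreeAct S ≌ FreeAct T) :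
    Nonempty (rankOne T ≅ e.functor.obj (rankOne S)) := by
  obtain ⟨x⟩ := nonempty_obj_of_faithful e.functor (A := rankOne S) ⟨⟩
  obtain ⟨y⟩ := nonempty_obj_of_faithful e.inverse (A := rankOne T) ⟨⟩
  have := subsingleton_of_retract (((retractOfPoint y).map e.functor).trans
    (Retract.ofIso (e.counitIso.app _)))
  exact ⟨isoOfSubsingleton x⟩

section FullyFaithful

variable {T : Type} [Monoid T] {F : FreeAct S ⥤ FreeAct T} (hF : F.FullyFaithful)
  (u : rankOne T ≅ F.obj (rankOne S))

noncomputable def mulEquivOfIso : S ≃* T :=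
  MulEquiv.unop (endMulEquiv.trans ((hF.mulEquivEnd _).trans (u.symm.conj.trans endMulEquiv.symm)))

theorem homOfPoint_mulEquivOfIso (s : S) :
    homOfPoint ((mulEquivOfIso hF u s, PUnit.unit) : T × (rankOne T).X) =
      u.hom ≫ F.map (homOfPoint (s, PUnit.unit)) ≫ u.inv :=
  endMulEquiv.apply_symm_apply _

noncomputable def carrierEquiv (A : FreeAct S) : S × A.X ≃ T × (F.obj A).X :=
  (homEquiv A).symm.trans (hF.homEquiv.trans ((u.symm.homCongr (Iso.refl _)).trans (homEquiv _)))

theorem carrierEquiv_apply (A : FreeAct S) (p : S × A.X) :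
    carrierEquiv hF u A p = (u.hom ≫ F.map (homOfPoint p)).1 (1, PUnit.unit) := by
  simp [carrierEquiv]

theorem carrierEquiv_mul (A : FreeAct S) (s : S) (p : S × A.X) :
    carrierEquiv hF u A (s * p.1, p.2) =
      (mulEquivOfIso hF u s * (carrierEquiv hF u A p).1, (carrierEquiv hF u A p).2) := by
  have hconj : u.hom ≫ F.map (homOfPoint (s, PUnit.unit)) =
      homOfPoint (mulEquivOfIso hF u s, PUnit.unit) ≫ u.hom := by
    simp [homOfPoint_mulEquivOfIso]
  rw [carrierEquiv_apply, carrierEquiv_apply, homOfPoint_mul, F.map_comp, reassoc_of% hconj,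
    comp_val, homOfPoint_apply, one_mul]
  simpa using hom_apply_mul (u.hom ≫ F.map (homOfPoint p)) (mulEquivOfIso hF u s) (1, PUnit.unit)

theorem map_carrierEquiv {A B : FreeAct S} (f : A ⟶ B) (p : S × A.X) :
    (F.map f).1 (carrierEquiv hF u A p) = carrierEquiv hF u B (f.1 p) := by
  rw [carrierEquiv_apply, carrierEquiv_apply, ← homOfPoint_comp, F.map_comp]
  rfl

end FullyFaithful

end FreeAct

open FreeAct in
/-- **Theorem 8.** Let `S_Ω` be the free monoid on a set `Ω`, so that unary
algebras with set of unary operations `Ω` are the same as left `S_Ω`-acts. For every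
automorphism `φ` of the category `𝒜_Ω⁰` of finitely generated free `S_Ω`-acts there exist
a permutation `π` of `Ω` and bijections `s_F : F ≃ φ(F)` with
`s_F (f_{i₁} ⋯ f_{i_k} • a) = π(f_{i₁}) ⋯ π(f_{i_k}) • s_F a` for all generators
`f_{i₁}, …, f_{i_k} ∈ Ω`, such that `φ(f) = s_{F\'} ∘ f ∘ s_F⁻¹` for every morphism
`f : F ⟶ F\'`. -/
theorem unary_automorphism_description (Ω : Type)
    (φ : FreeAct (FreeMonoid Ω) ⥤ FreeAct (FreeMonoid Ω)) (hφ : IsCatAutomorphism φ) :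
    ∃ π : Equiv.Perm Ω,
      ∃ e : ∀ A : FreeAct (FreeMonoid Ω), (FreeMonoid Ω × A.X) ≃ (FreeMonoid Ω × (φ.obj A).X),
        (∀ (A : FreeAct (FreeMonoid Ω)) (l : List Ω) (p : FreeMonoid Ω × A.X),
            e A ((l.map FreeMonoid.of).prod * p.1, p.2) =
              ((l.map fun ω => FreeMonoid.of (π ω)).prod * (e A p).1, (e A p).2)) ∧
        ∀ {A B : FreeAct (FreeMonoid Ω)} (f : A ⟶ B) (p : FreeMonoid Ω × (φ.obj A).X),
          (φ.map f).1 p = e B (f.1 ((e A).symm p)) := by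
  obtain ⟨ψ, hφψ, hψφ⟩ := hφ
  let E := CategoryTheory.Equivalence.mk φ ψ (eqToIso hφψ.symm) (eqToIso hψφ)
  let hF : φ.FullyFaithful := E.fullyFaithfulFunctor
  obtain ⟨u⟩ : Nonempty (rankOne _ ≅ φ.obj (rankOne _)) := nonempty_iso_functor_obj_rankOne E
  let α := mulEquivOfIso hF u
  refine ⟨FreeMonoid.equivOfMulEquiv α, carrierEquiv hF u, fun A l p => ?_, fun f p => ?_⟩
  · have hα : α (l.map FreeMonoid.of).prod =
        (l.map fun ω => FreeMonoid.of (FreeMonoid.equivOfMulEquiv α ω)).prod := by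
      simp only [map_list_prod, List.map_map, Function.comp_def, FreeMonoid.of_equivOfMulEquiv]
    rw [carrierEquiv_mul, hα]
  · rw [← map_carrierEquiv, Equiv.apply_symm_apply]
end
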